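/- arXiv:1707.02646 — 5 statements merged into one kernel-verified Lean document; each statement's English description precedes it below -/
import Mathlib

section
/- Let S be a finitely generated submonoid of ℤⁿ and suppose there exists v ∈ ℤⁿ such that ⟨u, v⟩ > 0 for every nonzero u ∈ S. Then the set of irreducible elements of S is finite, it generates S as a monoid, and every subset of S that generates S as a monoid contains every irreducible element of S; in particular, the irreducible elements form the unique minimal generating set of S. -/
/-!
The additive map `ℓ u = ⟨u, v⟩` is positive on `S ∖ {0}`, so splitting a reducible element into
two nonzero summands strictly lowers `ℓ`; induction on `ℓ` writes every element of `S` as a sum of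
irreducibles. Conversely, if an irreducible element is a sum of elements of a generating set `T`,
all summands but one vanish, so it lies in `T`. Applied to a finite generating set, this gives
finiteness.
-/

/-- `u` is an irreducible element of the submonoid `S` of `ℤⁿ`:
`u ≠ 0` and `u` cannot be written as the sum of two nonzero elements of `S`. -/
def IsIrredElem {n : ℕ} (S : AddSubmonoid (Fin n → ℤ)) (u : Fin n → ℤ) : Prop :=
  u ≠ 0 ∧ ¬ ∃ v w : Fin n → ℤ, v ∈ S ∧ w ∈ S ∧ v ≠ 0 ∧ w ≠ 0 ∧ u = v + w

variable {n : ℕ} {S : AddSubmonoid (Fin n → ℤ)}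

theorem mem_of_isIrredElem_of_mem_closure {T : Set (Fin n → ℤ)}
    (hT : AddSubmonoid.closure T ≤ S) {u : Fin n → ℤ} (hu : IsIrredElem S u)
    (huT : u ∈ AddSubmonoid.closure T) : u ∈ T := by
  induction huT using AddSubmonoid.closure_induction with
  | mem x hx => exact hx
  | zero => exact (hu.1 rfl).elim
  | add x y hx hy ihx ihy =>
    by_cases hx0 : x = 0
    · rw [hx0, zero_add] at hu ⊢
      exact ihy hu
    by_cases hy0 : y = 0
    · rw [hy0, add_zero] at hu ⊢
      exact ihx hu
    exact absurd ⟨x, y, hT hx, hT hy, hx0, hy0, rfl⟩ hu.2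

theorem irreducibles_subset_of_closure_eq {T : Set (Fin n → ℤ)}
    (hT : AddSubmonoid.closure T = S) : {u | u ∈ S ∧ IsIrredElem S u} ⊆ T := fun _ ⟨huS, hu⟩ =>
  mem_of_isIrredElem_of_mem_closure hT.le hu (hT ▸ huS)

theorem closure_irreducibles_eq (ℓ : (Fin n → ℤ) →+ ℤ) (hℓ : ∀ u ∈ S, u ≠ 0 → 0 < ℓ u) :
    AddSubmonoid.closure {u | u ∈ S ∧ IsIrredElem S u} = S := by
  refine le_antisymm (AddSubmonoid.closure_le.2 fun u hu => hu.1) fun u hu => ?_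
  induction hk : (ℓ u).toNat using Nat.strong_induction_on generalizing u with
  | _ k ih =>
  by_cases hu0 : u = 0
  · exact hu0 ▸ zero_mem _
  by_cases hirr : IsIrredElem S u
  · exact AddSubmonoid.subset_closure ⟨hu, hirr⟩
  obtain ⟨a, b, ha, hb, ha0, hb0, rfl⟩ :
      ∃ a b, a ∈ S ∧ b ∈ S ∧ a ≠ 0 ∧ b ≠ 0 ∧ u = a + b := by
    simpa [IsIrredElem, hu0] using hirr
  have hℓa := hℓ a ha ha0
  have hℓb := hℓ b hb hb0
  rw [map_add] at hk
  exact add_mem (ih _ (by omega) a ha rfl) (ih _ (by omega) b hb rfl)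

theorem stmt1 (n : ℕ) (S : AddSubmonoid (Fin n → ℤ)) (hFG : S.FG)
    (v : Fin n → ℤ) (hv : ∀ u ∈ S, u ≠ 0 → 0 < ∑ i, u i * v i) :
    {u : Fin n → ℤ | u ∈ S ∧ IsIrredElem S u}.Finite ∧
    AddSubmonoid.closure {u : Fin n → ℤ | u ∈ S ∧ IsIrredElem S u} = S ∧
    ∀ T : Set (Fin n → ℤ), T ⊆ (S : Set (Fin n → ℤ)) →
      AddSubmonoid.closure T = S →
      {u : Fin n → ℤ | u ∈ S ∧ IsIrredElem S u} ⊆ T := by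
  obtain ⟨F, hF⟩ := hFG
  let ℓ : (Fin n → ℤ) →+ ℤ := AddMonoidHom.mk' (· ⬝ᵥ v) fun a b => add_dotProduct a b v
  exact ⟨F.finite_toSet.subset (irreducibles_subset_of_closure_eq hF),
    closure_irreducibles_eq ℓ hv, fun T _ hT => irreducibles_subset_of_closure_eq hT⟩
end

section
/- Fix an integer m ≥ 1 and vectors u₁, …, u_s ∈ ℤⁿ that span ℝⁿ over ℝ, and let S be the submonoid of ℤⁿ generated by u₁, …, u_s. Then the set of functions S → ℕ ∪ {∞} of the form u ↦ (⟨a, u⟩ if ⟨a, u⟩ ≤ m, and ∞ otherwise), as a ranges over all a ∈ ℤⁿ with ⟨a, u⟩ ≥ 0 for every u ∈ S, is finite. -/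
/-!
For nonnegative integers, truncation at `m` (keep `z` if `z ≤ m`, send it to `∞` otherwise) is
compatible with addition. Hence a function `u ↦ trunc_m ⟨a, u⟩` on the monoid `S` is determined by
its values at the generators `u₁, …, u_s`, and those values range over the finite set
`{0, …, m, ∞}`.
-/

def truncAt (m : ℕ) (z : ℤ) : ℕ∞ := if z ≤ m then z.toNat else ⊤

theorem truncAt_eq_truncAt_iff {m : ℕ} {x y : ℤ} (hx : 0 ≤ x) (hy : 0 ≤ y) :
    truncAt m x = truncAt m y ↔ (x ≤ m ∧ x = y) ∨ (m < x ∧ m < y) := by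
  unfold truncAt
  split_ifs <;> simp <;> omega

theorem truncAt_add_congr {m : ℕ} {x y x' y' : ℤ} (hx : 0 ≤ x) (hy : 0 ≤ y) (hx' : 0 ≤ x')
    (hy' : 0 ≤ y') (h : truncAt m x = truncAt m x') (h' : truncAt m y = truncAt m y') :
    truncAt m (x + y) = truncAt m (x' + y') := by
  rw [truncAt_eq_truncAt_iff hx hx'] at h
  rw [truncAt_eq_truncAt_iff hy hy'] at h'
  rw [truncAt_eq_truncAt_iff (by omega) (by omega)]
  omega

theorem finite_range_truncAt (m : ℕ) : (Set.range (truncAt m)).Finite := by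
  refine (((Set.finite_Iic m).image ((↑) : ℕ → ℕ∞)).insert ⊤).subset ?_
  rintro _ ⟨z, rfl⟩
  unfold truncAt
  split_ifs
  · exact Or.inr ⟨z.toNat, by simp; omega, rfl⟩
  · exact Or.inl rfl

theorem AddSubmonoid.truncAt_eq_on_closure {M : Type*} [AddMonoid M] {T : Set M} {m : ℕ}
    {φ ψ : M →+ ℤ} (hφ : ∀ x ∈ closure T, 0 ≤ φ x) (hψ : ∀ x ∈ closure T, 0 ≤ ψ x)
    (h : ∀ x ∈ T, truncAt m (φ x) = truncAt m (ψ x)) :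
    ∀ x ∈ closure T, truncAt m (φ x) = truncAt m (ψ x) := by
  intro x hx
  induction hx using closure_induction with
  | mem x hx => exact h x hx
  | zero => simp
  | add x y hx hy ihx ihy =>
    simpa only [map_add] using
      truncAt_add_congr (hφ x hx) (hφ y hy) (hψ x hx) (hψ y hy) ihx ihy

theorem stmt4_general (m n s : ℕ) (u : Fin s → Fin n → ℤ) :
    Set.Finite
      {f : AddSubmonoid.closure (Set.range u) → ℕ∞ |
        ∃ a : Fin n → ℤ,
          (∀ w ∈ AddSubmonoid.closure (Set.range u), 0 ≤ ∑ j, a j * w j) ∧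
          ∀ w : AddSubmonoid.closure (Set.range u),
            f w = if (∑ j, a j * (w : Fin n → ℤ) j) ≤ (m : ℤ)
              then ((∑ j, a j * (w : Fin n → ℤ) j).toNat : ℕ∞) else ⊤} := by
  set S := AddSubmonoid.closure (Set.range u)
  have hu : ∀ i, u i ∈ S := fun i => AddSubmonoid.subset_closure ⟨i, rfl⟩
  refine Set.Finite.of_finite_image (f := fun f i => f ⟨u i, hu i⟩) ?_ ?_
  · refine (Set.Finite.pi (t := fun _ => Set.range (truncAt m))
      fun _ => finite_range_truncAt m).subset ?_
    rintro _ ⟨f, ⟨a, -, hf⟩, rfl⟩ i -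
    exact ⟨_, (hf _).symm⟩
  · rintro f ⟨a, ha, hf⟩ g ⟨b, hb, hg⟩ hfg
    funext w
    rw [hf, hg]
    refine AddSubmonoid.truncAt_eq_on_closure (φ := (dotProductBilin ℤ ℤ a).toAddMonoidHom)
      (ψ := (dotProductBilin ℤ ℤ b).toAddMonoidHom) ha hb ?_ w w.2
    rintro _ ⟨i, rfl⟩
    have hi := congrFun hfg i
    simp only [hf, hg] at hi
    exact hi

theorem stmt4 (m n s : ℕ) (hm : 1 ≤ m) (u : Fin s → Fin n → ℤ)
    (hspan : Submodule.span ℝ (Set.range fun i => fun j => (u i j : ℝ)) = ⊤) :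
    Set.Finite
      {f : AddSubmonoid.closure (Set.range u) → ℕ∞ |
        ∃ a : Fin n → ℤ,
          (∀ w ∈ AddSubmonoid.closure (Set.range u), 0 ≤ ∑ j, a j * w j) ∧
          ∀ w : AddSubmonoid.closure (Set.range u),
            f w = if (∑ j, a j * (w : Fin n → ℤ) j) ≤ (m : ℤ)
              then ((∑ j, a j * (w : Fin n → ℤ) j).toNat : ℕ∞) else ⊤} :=
  stmt4_general m n s u
end

section
/- Let k be an algebraically closed field of characteristic 0, let m ≥ 0 be an integer, and let R = k[t]/(t^{m+1}). Let u₁, …, u_n ∈ ℤⁿ be vectors that span ℝⁿ over ℝ, and let c₁, …, c_n be units of R. Then the set of group homomorphisms α from the additive group ℤⁿ to the multiplicative group of units Rˣ with α(uᵢ) = cᵢ for all i = 1, …, n is nonempty and finite. -/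
/-!
Evaluation at `t = 0` is a `k`-algebra map `ε : R → k` with nilpotent kernel, so `R` is Henselian
along `ker ε`. Hence a `d`-th root of `ε c` in the algebraically closed field `k` lifts to a `d`-th
root of `c` (it is a simple root since `d ≠ 0` in `k`): `Rˣ` is divisible, i.e. an injective
`ℤ`-module. A unit `y` with `y ^ d = 1` and `ε y = 1` is trivial, because
`y ^ d - 1 = (y - 1) * ∑ yⁱ` and `∑ yⁱ ≡ d` is a unit; so `ε` embeds the `d`-torsion of `Rˣ` into
the finitely many `d`-th roots of unity of `k`.

The `uᵢ` are linearly independent, `D = det u ≠ 0`, and `D • ℤⁿ ⊆ span uᵢ` via the adjugate.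
Injectivity of `Rˣ` extends `uᵢ ↦ cᵢ` to `ℤⁿ`; two extensions differ by a homomorphism killing
`D • ℤⁿ`, whose values on generators lie in the finite `D`-torsion of `Rˣ`.
-/

open Polynomial Multiplicative Matrix

theorem IsAdicComplete.of_isNilpotent {R M : Type*} [CommRing R] [AddCommGroup M] [Module R M]
    {I : Ideal R} (hI : IsNilpotent I) : IsAdicComplete I M := by
  obtain ⟨N, hN⟩ := hI
  have hbot : ∀ n, N ≤ n → (I ^ n • ⊤ : Submodule R M) = ⊥ := fun n hn => by
    rw [← Nat.add_sub_cancel' hn, pow_add, hN, zero_mul, Ideal.zero_eq_bot, Submodule.bot_smul]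
  refine { haus' := fun x hx => by simpa [hbot N le_rfl] using hx N,
            prec' := fun {f} hf => ⟨f N, fun {n} => ?_⟩ }
  rcases le_total n N with h | h
  · exact hf h
  · have hfN : f N = f n := SModEq.bot.mp (hbot N le_rfl ▸ hf h)
    rw [hfN]

theorem eq_one_of_pow_eq_one_of_isNilpotent_sub_one {A : Type*} [CommRing A] {d : ℕ}
    (hd : IsUnit (d : A)) {y : A} (hy : y ^ d = 1) (hnil : IsNilpotent (y - 1)) : y = 1 := by
  have hsum : IsUnit (∑ i ∈ Finset.range d, y ^ i) := by
    obtain ⟨q, hq⟩ : y - 1 ∣ ∑ i ∈ Finset.range d, (y ^ i - 1) :=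
      Finset.dvd_sum fun i _ => by simpa using sub_dvd_pow_sub_pow y 1 i
    rw [Finset.sum_sub_distrib, Finset.sum_const, Finset.card_range, nsmul_one,
      sub_eq_iff_eq_add] at hq
    rw [hq]
    exact ((Commute.all _ q).isNilpotent_mul_right hnil).isUnit_add_right_of_commute hd (.all _ _)
  have h := geom_sum_mul y d
  rw [hy, sub_self] at h
  exact sub_eq_zero.mp (hsum.mul_right_eq_zero.mp h)

section Augmented

variable {k R : Type*} [Field k] [CommRing R] [Algebra k R] (ε : R →ₐ[k] k)

theorem exists_pow_eq_of_isNilpotent_ker [IsAlgClosed k] (hε : IsNilpotent (RingHom.ker ε))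
    {d : ℕ} (hd : (d : k) ≠ 0) (c : Rˣ) : ∃ y : Rˣ, y ^ d = c := by
  -- provides `HenselianRing R (RingHom.ker ε)`
  have := IsAdicComplete.of_isNilpotent (M := R) hε
  have hd0 : 0 < d := Nat.pos_of_ne_zero (by rintro rfl; simp at hd)
  obtain ⟨b, hb⟩ := IsAlgClosed.exists_pow_nat_eq (ε c) hd0
  have hb0 : b ≠ 0 := by
    rintro rfl
    exact (c.isUnit.map ε).ne_zero (by rw [← hb, zero_pow hd0.ne'])
  obtain ⟨a, ha, -⟩ := HenselianRing.is_henselian (I := RingHom.ker ε) (X ^ d - C (c : R))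
    (monic_X_pow_sub_C _ hd0.ne') (algebraMap k R b) (by simp [RingHom.mem_ker, hb]) (by
      refine IsUnit.map _ ?_
      rw [derivative_sub, derivative_C, sub_zero, derivative_X_pow, eval_mul, eval_C, eval_pow,
        eval_X, ← map_natCast (algebraMap k R), ← map_pow, ← map_mul]
      exact (isUnit_iff_ne_zero.mpr (mul_ne_zero hd (pow_ne_zero _ hb0))).map _)
  have had : a ^ d = c := by simpa [sub_eq_zero] using ha
  have hua : IsUnit a := (isUnit_pow_iff hd0.ne').mp (had ▸ c.isUnit)
  exact ⟨hua.unit, Units.ext (by simpa using had)⟩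

theorem finite_setOf_pow_eq_one_of_isNilpotent_ker (hε : IsNilpotent (RingHom.ker ε))
    {d : ℕ} (hd : (d : k) ≠ 0) : {y : Rˣ | y ^ d = 1}.Finite := by
  have hd0 : 0 < d := Nat.pos_of_ne_zero (by rintro rfl; simp at hd)
  obtain ⟨N, hN⟩ := hε
  refine Set.Finite.of_finite_image (f := fun y : Rˣ => ε y)
    ((nthRootsFinset d (1 : k)).finite_toSet.subset ?_) ?_
  · rintro _ ⟨y, hy, rfl⟩
    rw [Finset.mem_coe, mem_nthRootsFinset hd0, ← map_pow, ← Units.val_pow_eq_pow_val,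
      (hy : y ^ d = 1), Units.val_one, map_one]
  · intro y₁ hy₁ y₂ hy₂ h
    have hdR : IsUnit (d : R) := by
      simpa using (isUnit_iff_ne_zero.mpr hd).map (algebraMap k R)
    have hquot : ((y₁ * y₂⁻¹ : Rˣ) : R) = 1 := by
      refine eq_one_of_pow_eq_one_of_isNilpotent_sub_one hdR ?_ ⟨N, ?_⟩
      · rw [← Units.val_pow_eq_pow_val, mul_pow, inv_pow, (hy₁ : y₁ ^ d = 1),
          (hy₂ : y₂ ^ d = 1), inv_one, mul_one, Units.val_one]
      · have hmem : ((y₁ * y₂⁻¹ : Rˣ) : R) - 1 ∈ RingHom.ker ε := by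
          rw [RingHom.mem_ker, map_sub, Units.val_mul, map_mul, map_one,
            show ε y₁ = ε y₂ from h, ← map_mul, Units.mul_inv, map_one, sub_self]
        simpa [hN] using Ideal.pow_mem_pow hmem N
    exact mul_inv_eq_one.mp (Units.ext hquot)

end Augmented

theorem exists_algHom_quotient_X_pow_isNilpotent_ker (k : Type*) [Field k] (m : ℕ) :
    ∃ ε : (k[X] ⧸ Ideal.span {(X : k[X]) ^ (m + 1)}) →ₐ[k] k, IsNilpotent (RingHom.ker ε) := by
  refine ⟨Ideal.Quotient.liftₐ _ (aeval 0) fun p hp => ?_, ?_⟩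
  · obtain ⟨q, rfl⟩ := Ideal.mem_span_singleton'.mp hp
    simp
  · rw [Ideal.FG.isNilpotent_iff_le_nilradical (IsNoetherian.noetherian _)]
    intro z hz
    rw [mem_nilradical]
    obtain ⟨p, rfl⟩ := Ideal.Quotient.mk_surjective z
    obtain ⟨q, rfl⟩ : X ∣ p := by
      rw [X_dvd_iff, coeff_zero_eq_eval_zero]
      simpa [RingHom.mem_ker, Ideal.Quotient.liftₐ_apply] using hz
    refine ⟨m + 1, ?_⟩
    rw [← map_pow, Ideal.Quotient.eq_zero_iff_mem, mul_pow]
    exact Ideal.mul_mem_right _ _ (Ideal.subset_span rfl)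

theorem exists_monoidHom_apply_ofAdd_eq {ι M G : Type*} [Fintype ι] [AddCommGroup M]
    [CommGroup G] (hG : ∀ n : ℕ, n ≠ 0 → Function.Surjective fun g : G => g ^ n)
    {u : ι → M} (hu : LinearIndependent ℤ u) (c : ι → G) :
    ∃ α : Multiplicative M →* G, ∀ i, α (ofAdd (u i)) = c i := by
  classical
  let : DivisibleBy (Additive G) ℕ := divisibleByOfSMulRightSurj _ _ fun hn => hG _ hn
  let := AddGroup.divisibleByIntOfDivisibleByNat (Additive G)
  obtain ⟨h, hh⟩ := (Module.Baer.of_divisible (Additive G)).extension_property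
    (Fintype.linearCombination ℤ u) (linearIndependent_iff_injective_fintypeLinearCombination.mp hu)
    (Fintype.linearCombination ℤ fun i => Additive.ofMul (c i))
  refine ⟨AddMonoidHom.toMultiplicativeLeft h.toAddMonoidHom, fun i => ?_⟩
  have hi := LinearMap.congr_fun hh (Pi.single i 1)
  simp only [LinearMap.comp_apply, Fintype.linearCombination_apply_single, one_smul] at hi
  exact congrArg Additive.toMul hi

theorem finite_setOf_monoidHom_apply_eq {ι H G : Type*} [Group H] [Group.FG H] [CommGroup G]
    {D : ℤ} (hG : {g : G | g ^ D = 1}.Finite) (v : ι → H)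
    (hv : ∀ x, x ^ D ∈ Subgroup.closure (Set.range v)) (c : ι → G) :
    {α : H →* G | ∀ i, α (v i) = c i}.Finite := by
  obtain ⟨S, hS⟩ := Group.fg_def.mp ‹_›
  rcases Set.eq_empty_or_nonempty {α : H →* G | ∀ i, α (v i) = c i} with hempty | ⟨α₀, hα₀⟩
  · simp [hempty]
  refine Set.Finite.of_finite_image (f := fun α (s : S) => α s / α₀ s)
    ((Set.Finite.pi fun _ => hG).subset ?_) ?_
  · rintro _ ⟨α, hα, rfl⟩ s -
    have hagree : α (s ^ D) = α₀ (s ^ D) :=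
      MonoidHom.eqOn_closure (by rintro _ ⟨i, rfl⟩; exact (hα i).trans (hα₀ i).symm) (hv s)
    simp only [Set.mem_ofPred_eq, div_zpow, ← map_zpow, hagree, div_self']
  · intro α _ β _ h
    refine MonoidHom.eq_of_eqOn_dense hS fun s hs => ?_
    simpa using congr_fun h ⟨s, hs⟩

theorem Matrix.det_ne_zero_of_span_rows_eq_top {ι : Type*} [Fintype ι] [DecidableEq ι]
    (U : Matrix ι ι ℤ) (h : Submodule.span ℝ (Set.range fun i j => (U i j : ℝ)) = ⊤) :
    U.det ≠ 0 := by
  have hind : LinearIndependent ℝ (U.map (Int.cast : ℤ → ℝ)).row :=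
    linearIndependent_of_top_le_span_of_card_eq_finrank h.ge (by simp)
  have hunit := (isUnit_iff_isUnit_det _).mp (linearIndependent_rows_iff_isUnit.mp hind)
  have hcast : ((U.det : ℤ) : ℝ) = (U.map Int.cast).det := (Int.castRingHom ℝ).map_det U
  exact fun h0 => hunit.ne_zero (by rw [← hcast, h0, Int.cast_zero])

theorem Matrix.ofAdd_zpow_det_mem_closure_rows {ι : Type*} [Fintype ι] [DecidableEq ι]
    (U : Matrix ι ι ℤ) (x : Multiplicative (ι → ℤ)) :
    x ^ U.det ∈ Subgroup.closure (Set.range fun i => ofAdd (U i)) := by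
  have hx : x ^ U.det = ∏ i, ofAdd (U i) ^ (toAdd x ᵥ* U.adjugate) i := by
    have hw : toAdd x ᵥ* U.adjugate ᵥ* U = U.det • toAdd x := by
      rw [vecMul_vecMul, adjugate_mul, vecMul_smul, vecMul_one]
    rw [← ofAdd_toAdd x, ← ofAdd_zsmul, toAdd_ofAdd, ← hw, vecMul_eq_sum, ofAdd_sum]
    simp only [ofAdd_zsmul]
  rw [hx]
  exact Subgroup.prod_mem _ fun i _ =>
    Subgroup.zpow_mem _ (Subgroup.subset_closure (Set.mem_range_self i)) _

theorem stmt5 (k : Type*) [Field k] [IsAlgClosed k] [CharZero k] (m n : ℕ)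
    (u : Fin n → Fin n → ℤ)
    (hspan : Submodule.span ℝ (Set.range fun i => fun j => (u i j : ℝ)) = ⊤)
    (c : Fin n → (Polynomial k ⧸ Ideal.span {(Polynomial.X : Polynomial k) ^ (m + 1)})ˣ) :
    {α : Multiplicative (Fin n → ℤ) →*
        (Polynomial k ⧸ Ideal.span {(Polynomial.X : Polynomial k) ^ (m + 1)})ˣ |
      ∀ i, α (Multiplicative.ofAdd (u i)) = c i}.Nonempty ∧
    {α : Multiplicative (Fin n → ℤ) →*
        (Polynomial k ⧸ Ideal.span {(Polynomial.X : Polynomial k) ^ (m + 1)})ˣ |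
      ∀ i, α (Multiplicative.ofAdd (u i)) = c i}.Finite := by
  obtain ⟨ε, hε⟩ := exists_algHom_quotient_X_pow_isNilpotent_ker k m
  have hdet : (Matrix.of u).det ≠ 0 := Matrix.det_ne_zero_of_span_rows_eq_top _ hspan
  refine ⟨exists_monoidHom_apply_ofAdd_eq
    (fun d hd c => exists_pow_eq_of_isNilpotent_ker ε hε (Nat.cast_ne_zero.mpr hd) c)
    (Matrix.linearIndependent_rows_of_det_ne_zero hdet) c,
    finite_setOf_monoidHom_apply_eq ?_ _ (Matrix.ofAdd_zpow_det_mem_closure_rows (Matrix.of u)) c⟩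
  simpa only [pow_natAbs_eq_one] using finite_setOf_pow_eq_one_of_isNilpotent_ker ε hε
    (d := (Matrix.of u).det.natAbs) (by simpa using hdet)
end

section
/- Let S be a submonoid of ℤⁿ and let a ∈ ℤⁿ satisfy ⟨a, u⟩ > 0 for every nonzero u ∈ S. Suppose u₁, …, u_n ∈ S are linearly independent over ℝ and Σ_{i=1}^{n} ⟨a, uᵢ⟩ ≤ Σ_{i=1}^{n} ⟨a, vᵢ⟩ for every n-tuple v₁, …, v_n of elements of S that is linearly independent over ℝ. Then each uᵢ is irreducible in S. -/
/-!
If `uᵢ = v + w` with `v, w ∈ S \ {0}`, multilinearity of the determinant in the `i`-th row gives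
`det(u[i ↦ v]) + det(u[i ↦ w]) = det u ≠ 0`, so one of the two exchanged families is still a
basis. Since `⟨a, ·⟩` is positive on `S \ {0}`, that basis has strictly smaller total weight than
`u`, contradicting minimality.
-/

open Function Matrix

theorem LinearIndependent.update_or_update_of_eq_add {K ι : Type*} [Field K] [Fintype ι]
    [DecidableEq ι] {v : ι → ι → K} (hv : LinearIndependent K v) {i : ι} {x y : ι → K}
    (hxy : v i = x + y) :
    LinearIndependent K (Function.update v i x) ∨ LinearIndependent K (Function.update v i y) := by
  have indep_iff (w : ι → ι → K) : LinearIndependent K w ↔ (of w).det ≠ 0 := by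
    rw [← isUnit_iff_ne_zero, ← isUnit_iff_isUnit_det, ← linearIndependent_rows_iff_isUnit]
    rfl
  rw [indep_iff] at hv
  simp only [indep_iff, ← not_and_or]
  rintro ⟨hx, hy⟩
  apply hv
  have hrow : of v = (of v).updateRow i (x + y) := by
    rw [← hxy]; exact (updateRow_eq_self _ _).symm
  rw [hrow, det_updateRow_add]
  exact (congrArg₂ (· + ·) hx hy).trans (add_zero 0)

theorem sum_update_add_eq_sum {ι M : Type*} [Fintype ι] [DecidableEq ι] [AddCommMonoid M]
    (f : ι → M) (i : ι) {x y : M} (hxy : f i = x + y) :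
    ∑ k, update f i x k + y = ∑ k, f k := by
  rw [Finset.sum_update_of_mem (Finset.mem_univ i), Finset.sum_eq_add_sum_sdiff_singleton_of_mem
    (Finset.mem_univ i), hxy, add_right_comm]

theorem sum_dotProduct_update_lt {ι : Type*} [Fintype ι] [DecidableEq ι]
    (S : AddSubmonoid (ι → ℤ)) {a : ι → ℤ} (ha : ∀ u ∈ S, u ≠ 0 → 0 < a ⬝ᵥ u)
    (u : ι → ι → ℤ) (i : ι) {x y : ι → ℤ} (hy : y ∈ S) (hy0 : y ≠ 0) (hxy : u i = x + y) :
    ∑ k, a ⬝ᵥ update u i x k < ∑ k, a ⬝ᵥ u k := by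
  have hsum := sum_update_add_eq_sum (fun k => a ⬝ᵥ u k) i
    (show a ⬝ᵥ u i = a ⬝ᵥ x + a ⬝ᵥ y by rw [hxy, dotProduct_add])
  simp only [← apply_update (fun _ w => a ⬝ᵥ w)] at hsum
  linarith [ha y hy hy0]

theorem stmt8 (n : ℕ) (S : AddSubmonoid (Fin n → ℤ)) (a : Fin n → ℤ)
    (ha : ∀ u ∈ S, u ≠ 0 → 0 < ∑ j, a j * u j)
    (u : Fin n → Fin n → ℤ) (hu : ∀ i, u i ∈ S)
    (hind : LinearIndependent ℝ (fun i : Fin n => fun j => (u i j : ℝ)))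
    (hmin : ∀ v : Fin n → Fin n → ℤ, (∀ i, v i ∈ S) →
      LinearIndependent ℝ (fun i : Fin n => fun j => (v i j : ℝ)) →
      (∑ i : Fin n, ∑ j, a j * u i j) ≤ ∑ i : Fin n, ∑ j, a j * v i j) :
    ∀ i, IsIrredElem S (u i) := by
  intro i
  have cast_update (x : Fin n → ℤ) : (fun k j => (update u i x k j : ℝ)) =
      update (fun k j => (u k j : ℝ)) i (fun j => (x j : ℝ)) :=
    funext fun k => apply_update (fun _ w j => (w j : ℝ)) u i x k
  have exchange {x y : Fin n → ℤ} (hx : x ∈ S) (hy : y ∈ S) (hy0 : y ≠ 0) (hxy : u i = x + y)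
      (hli : LinearIndependent ℝ (update (fun k j => (u k j : ℝ)) i (fun j => (x j : ℝ)))) :
      False := by
    have hS : ∀ k, update u i x k ∈ S :=
      (forall_update_iff u fun _ w => w ∈ S).2 ⟨hx, fun k _ => hu k⟩
    exact (sum_dotProduct_update_lt S ha u i hy hy0 hxy).not_ge
      (hmin _ hS (by rwa [cast_update]))
  refine ⟨fun h0 => hind.ne_zero i (funext fun j => by simp [h0]), ?_⟩
  rintro ⟨v, w, hv, hw, hv0, hw0, hvw⟩
  have hcast : (fun j => (u i j : ℝ)) = (fun j => (v j : ℝ)) + fun j => (w j : ℝ) := by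
    ext j; simp [hvw]
  rcases hind.update_or_update_of_eq_add hcast with h | h
  · exact exchange hv hw hw0 hvw h
  · exact exchange hw hv hv0 (hvw.trans (add_comm v w)) h
end

section
/- Let P = ℂ[x₁, …, x_{n+1}] be a polynomial ring, let f ∈ P be a polynomial that is not divisible by xᵢ for any i = 1, …, n+1, and let L be the localization of P at the multiplicative submonoid generated by x₁, …, x_{n+1} (the Laurent polynomial ring). If the ideal of L generated by the image of f under the localization map is a prime ideal of L, then the ideal of P generated by f is a prime ideal of P. -/
/-!
Each `xᵢ` is prime and does not divide `f`, so `f ∣ a * m` implies `f ∣ a` for every monomial `m`.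
Hence `(f)` is the contraction of its extension to the Laurent polynomial ring, and the
contraction of a prime ideal is prime.
-/

open MvPolynomial

theorem Prime.dvd_of_dvd_mul_of_not_dvd {R : Type*} [CommMonoidWithZero R] [IsCancelMulZero R]
    {p f a : R} (hp : Prime p) (hpf : ¬ p ∣ f) (h : f ∣ a * p) : f ∣ a := by
  obtain ⟨c, hc⟩ := h
  obtain ⟨d, rfl⟩ := (hp.dvd_or_dvd ⟨a, by rw [← hc, mul_comm]⟩).resolve_left hpf
  exact ⟨d, mul_right_cancel₀ hp.ne_zero (by rw [hc]; ac_rfl)⟩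

theorem Submonoid.dvd_of_dvd_mul_of_mem_closure {R : Type*} [CommMonoid R] {S : Set R} {f : R}
    (hS : ∀ p ∈ S, ∀ a, f ∣ a * p → f ∣ a) {s : R} (hs : s ∈ closure S) :
    ∀ a, f ∣ a * s → f ∣ a := by
  induction hs using closure_induction with
  | mem p hp => exact hS p hp
  | one => simp
  | mul x y _ _ hx hy => exact fun a h => hx a (hy (a * x) (by rwa [← mul_assoc] at h))

theorem IsLocalization.comap_span_singleton_algebraMap {R : Type*} [CommRing R]
    {M : Submonoid R} (S : Type*) [CommRing S] [Algebra R S] [IsLocalization M S] {f : R}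
    (hM : ∀ s ∈ M, ∀ a, f ∣ a * s → f ∣ a) :
    (Ideal.span {algebraMap R S f}).comap (algebraMap R S) = Ideal.span {f} := by
  refine le_antisymm (fun a ha => ?_) (Ideal.le_comap_of_map_le ?_)
  · rw [Ideal.mem_comap, ← Set.image_singleton, ← Ideal.map_span,
      IsLocalization.mem_map_algebraMap_iff M] at ha
    obtain ⟨⟨⟨b, hb⟩, s⟩, hbs⟩ := ha
    rw [← map_mul, IsLocalization.eq_iff_exists M] at hbs
    obtain ⟨c, hc⟩ := hbs
    rw [Ideal.mem_span_singleton] at hb ⊢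
    refine hM _ (mul_mem s.2 c.2) a ?_
    have hcs : a * (s * c) = c * b := by linear_combination hc
    exact hcs ▸ dvd_mul_of_dvd_right hb _
  · rw [Ideal.map_span, Set.image_singleton]

theorem stmt9 (n : ℕ) (f : MvPolynomial (Fin (n + 1)) ℂ)
    (hf : ∀ i : Fin (n + 1), ¬ (MvPolynomial.X i ∣ f))
    (hprime : (Ideal.span
        {algebraMap (MvPolynomial (Fin (n + 1)) ℂ)
          (Localization (Submonoid.closure
            (Set.range (MvPolynomial.X : Fin (n + 1) → MvPolynomial (Fin (n + 1)) ℂ)))) f}).IsPrime) :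
    (Ideal.span {f}).IsPrime := by
  set M := Submonoid.closure (Set.range (X : Fin (n + 1) → MvPolynomial (Fin (n + 1)) ℂ))
  have hM : ∀ s ∈ M, ∀ a, f ∣ a * s → f ∣ a := fun s hs => by
    refine Submonoid.dvd_of_dvd_mul_of_mem_closure ?_ hs
    rintro _ ⟨i, rfl⟩ a
    exact X_prime.dvd_of_dvd_mul_of_not_dvd (hf i)
  rw [← IsLocalization.comap_span_singleton_algebraMap (Localization M) hM]
  exact hprime.comap _
end
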